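/- arXiv:1310.6589 — 5 statements merged into one kernel-verified Lean document; each statement's English description precedes it below -/
import Mathlib

section
/- Let p ≡ 5 (mod 8), q ≡ 3 (mod 8), q' ≡ 7 (mod 8) be primes with (q/p) = (q'/p) = -1. Then the equation p·x² − q·q'·y² = −4 has a solution in integers x, y, while the equation p·x² − q·q'·y² = 4 has no integer solution. -/
/-!
Take a nontrivial solution of the Pell equation `x² - pqq'y² = 1` with `x` minimal. Since
`pqq' ≡ 1 (mod 4)`, `x = 2k + 1` is odd and `k(k + 1) = pqq'z²`. As `k` and `k + 1` are coprime,
`k = au²` and `k + 1 = bv²` with `ab = pqq'`, so `bv² = au² + 1`. Read modulo `p` and `q`, using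
`(q/p) = (q'/p) = (p/q) = -1`, `(-1/p) = 1` and `(-1/q) = -1`, this excludes every splitting except
`a = pqq'`, which gives the smaller Pell solution `(v, u)`, and `a = p`, where `(2u, 2v)` solves
`px² - qq'y² = -4`. Conversely, `px² - qq'y² = 4` would make `p` a square modulo `q`.
-/

theorem isSquare_of_mul_sq_eq_sq {K : Type*} [Field K] {c v w : K} (hw : w ≠ 0)
    (h : c * v ^ 2 = w ^ 2) : IsSquare c := by
  have hv : v ≠ 0 := by rintro rfl; exact hw (by simpa using h.symm)
  exact ⟨w / v, by field_simp; linear_combination h⟩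

theorem isSquare_natCast_of_dvd {r a b u v : ℕ} [Fact r.Prime] (hr : r ∣ a)
    (h : b * v ^ 2 = a * u ^ 2 + 1) : IsSquare (b : ZMod r) := by
  have h' := congrArg (Nat.cast : ℕ → ZMod r) h
  push_cast [(ZMod.natCast_eq_zero_iff a r).2 hr, zero_mul, zero_add] at h'
  exact isSquare_of_mul_sq_eq_sq one_ne_zero (by rw [h', one_pow])

theorem isSquare_neg_natCast_of_dvd {r a b u v : ℕ} [Fact r.Prime] (hr : r ∣ b)
    (h : b * v ^ 2 = a * u ^ 2 + 1) : IsSquare (-(a : ZMod r)) := by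
  have h' := congrArg (Nat.cast : ℕ → ZMod r) h
  push_cast [(ZMod.natCast_eq_zero_iff b r).2 hr] at h'
  exact isSquare_of_mul_sq_eq_sq (v := (u : ZMod r)) one_ne_zero (by linear_combination h')

theorem Nat.Coprime.exists_eq_mul_sq {m n a b z : ℕ} (hmn : m.Coprime n)
    (h : m * n = a * b * z ^ 2) (ha : a ∣ m) (hb : b ∣ n) :
    ∃ u v, m = a * u ^ 2 ∧ n = b * v ^ 2 := by
  rcases eq_or_ne a 0 with rfl | ha0
  · obtain rfl := zero_dvd_iff.1 ha
    obtain rfl := Nat.coprime_zero_left n |>.1 hmn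
    exact ⟨0, 1, by simp, by simpa using (Nat.eq_one_of_dvd_one hb).symm⟩
  rcases eq_or_ne b 0 with rfl | hb0
  · obtain rfl := zero_dvd_iff.1 hb
    obtain rfl := Nat.coprime_zero_right m |>.1 hmn
    exact ⟨1, 0, by simpa using (Nat.eq_one_of_dvd_one ha).symm, by simp⟩
  obtain ⟨m', rfl⟩ := ha
  obtain ⟨n', rfl⟩ := hb
  have hsq : m' * n' = z ^ 2 :=
    Nat.eq_of_mul_eq_mul_left (Nat.pos_of_ne_zero (mul_ne_zero ha0 hb0)) (by rw [← h]; ring)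
  have hcop : m'.Coprime n' := hmn.coprime_mul_left_right.coprime_mul_left
  obtain ⟨u, rfl⟩ := exists_eq_pow_of_mul_eq_pow (Nat.isUnit_iff.2 hcop) hsq
  obtain ⟨v, rfl⟩ :=
    exists_eq_pow_of_mul_eq_pow (Nat.isUnit_iff.2 hcop.symm) ((mul_comm _ _).trans hsq)
  exact ⟨u, v, rfl, rfl⟩

theorem exists_mul_sq_eq_mul_sq_add_one {k a b z : ℕ} (h : k * (k + 1) = a * b * z ^ 2)
    (ha : a ∣ k) (hb : b ∣ k + 1) : ∃ u v, k = a * u ^ 2 ∧ b * v ^ 2 = a * u ^ 2 + 1 := by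
  obtain ⟨u, v, hu, hv⟩ :=
    (Nat.coprime_self_add_right.2 (Nat.coprime_one_right k)).exists_eq_mul_sq h ha hb
  exact ⟨u, v, hu, by rw [← hv, ← hu]⟩

theorem Nat.Prime.dvd_or_dvd_succ {r k D z : ℕ} (hr : r.Prime) (hrD : r ∣ D)
    (hk : k * (k + 1) = D * z ^ 2) : r ∣ k ∨ r ∣ k + 1 :=
  hr.dvd_mul.1 (hrD.trans (Dvd.intro _ hk.symm))

theorem Nat.Prime.not_isSquare_mul {p m : ℕ} (hp : p.Prime) (hm : ¬p ∣ m) :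
    ¬IsSquare (p * m) := by
  rintro ⟨r, hr⟩
  obtain ⟨s, rfl⟩ : p ∣ r := (hp.dvd_mul.1 (hr ▸ dvd_mul_right p m)).elim id id
  refine hm ⟨s * s, Nat.eq_of_mul_eq_mul_left hp.pos ?_⟩
  rw [hr]; ring

theorem exists_eq_two_mul_add_one_of_sq_eq {D x y : ℕ} (hD : D % 4 = 1)
    (h : x ^ 2 = D * y ^ 2 + 1) : ∃ k z, x = 2 * k + 1 ∧ k * (k + 1) = D * z ^ 2 := by
  have hmod4 : ∀ a b : ZMod 4, a ^ 2 = b ^ 2 + 1 → a.val % 2 = 1 ∧ b.val % 2 = 0 := by decide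
  have h4 := congrArg (Nat.cast : ℕ → ZMod 4) h
  push_cast [show (D : ZMod 4) = 1 by rw [← ZMod.natCast_mod, hD]; rfl, one_mul] at h4
  obtain ⟨hx, hy⟩ := hmod4 _ _ h4
  rw [ZMod.val_natCast] at hx hy
  obtain ⟨k, rfl⟩ : ∃ k, x = 2 * k + 1 := ⟨x / 2, by omega⟩
  obtain ⟨z, rfl⟩ : ∃ z, y = 2 * z := ⟨y / 2, by omega⟩
  exact ⟨k, z, rfl, by nlinarith⟩

theorem not_dvd_succ_of_mul_succ_eq {p q q' k z : ℕ} [Fact p.Prime] [Fact q.Prime]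
    [Fact q'.Prime] (hpq : p.Coprime q) (hpq' : p.Coprime q') (hqq' : q.Coprime q')
    (hQp : ¬IsSquare (q : ZMod p)) (hQ'p : ¬IsSquare (q' : ZMod p))
    (hm1p : IsSquare (-1 : ZMod p)) (hPq : ¬IsSquare (p : ZMod q))
    (hm1q : ¬IsSquare (-1 : ZMod q)) (hk : k * (k + 1) = p * q * q' * z ^ 2) :
    ¬p ∣ k + 1 := by
  intro hp
  have of_neg : ∀ c : ℕ, IsSquare (-(c : ZMod p)) → IsSquare (c : ZMod p) := fun c h => by
    simpa using hm1p.mul h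
  rcases (Fact.out : q.Prime).dvd_or_dvd_succ ⟨p * q', by ring⟩ hk with hq | hq <;>
    rcases (Fact.out : q'.Prime).dvd_or_dvd_succ (dvd_mul_left _ _) hk with hq' | hq'
  · obtain ⟨u, v, -, h⟩ := exists_mul_sq_eq_mul_sq_add_one (z := z) (a := q * q') (b := p)
      (hk.trans (by ring)) (hqq'.mul_dvd_of_dvd_of_dvd hq hq') hp
    exact hPq (isSquare_natCast_of_dvd (dvd_mul_right q q') h)
  · obtain ⟨u, v, -, h⟩ := exists_mul_sq_eq_mul_sq_add_one (z := z) (a := q) (b := p * q')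
      (hk.trans (by ring)) hq (hpq'.mul_dvd_of_dvd_of_dvd hp hq')
    exact hQp (of_neg q (isSquare_neg_natCast_of_dvd (dvd_mul_right p q') h))
  · obtain ⟨u, v, -, h⟩ := exists_mul_sq_eq_mul_sq_add_one (z := z) (a := q') (b := p * q)
      (hk.trans (by ring)) hq' (hpq.mul_dvd_of_dvd_of_dvd hp hq)
    exact hQ'p (of_neg q' (isSquare_neg_natCast_of_dvd (dvd_mul_right p q) h))
  · obtain ⟨u, v, -, h⟩ := exists_mul_sq_eq_mul_sq_add_one (z := z) (a := 1) (b := p * q * q')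
      (hk.trans (by ring)) (one_dvd k)
      ((hpq'.mul_left hqq').mul_dvd_of_dvd_of_dvd (hpq.mul_dvd_of_dvd_of_dvd hp hq) hq')
    exact hm1q (by simpa using isSquare_neg_natCast_of_dvd (r := q) ⟨p * q', by ring⟩ h)

theorem exists_solution_or_pell_of_mul_succ_eq {p q q' k z : ℕ} [Fact p.Prime] [Fact q.Prime]
    [Fact q'.Prime] (hpq : p.Coprime q) (hpq' : p.Coprime q') (hqq' : q.Coprime q')
    (hQp : ¬IsSquare (q : ZMod p)) (hQ'p : ¬IsSquare (q' : ZMod p))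
    (hk : k * (k + 1) = p * q * q' * z ^ 2) (hp : p ∣ k) :
    (∃ u v, q * q' * v ^ 2 = p * u ^ 2 + 1) ∨
      ∃ u v, k = p * q * q' * u ^ 2 ∧ v ^ 2 = k + 1 := by
  rcases (Fact.out : q.Prime).dvd_or_dvd_succ ⟨p * q', by ring⟩ hk with hq | hq <;>
    rcases (Fact.out : q'.Prime).dvd_or_dvd_succ (dvd_mul_left _ _) hk with hq' | hq'
  · obtain ⟨u, v, hu, h⟩ := exists_mul_sq_eq_mul_sq_add_one (z := z) (a := p * q * q') (b := 1)
      (hk.trans (by ring))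
      ((hpq'.mul_left hqq').mul_dvd_of_dvd_of_dvd (hpq.mul_dvd_of_dvd_of_dvd hp hq) hq') (one_dvd _)
    exact .inr ⟨u, v, hu, by linarith⟩
  · obtain ⟨u, v, -, h⟩ := exists_mul_sq_eq_mul_sq_add_one (z := z) (a := p * q) (b := q')
      (hk.trans (by ring)) (hpq.mul_dvd_of_dvd_of_dvd hp hq) hq'
    exact (hQ'p (isSquare_natCast_of_dvd (dvd_mul_right p q) h)).elim
  · obtain ⟨u, v, -, h⟩ := exists_mul_sq_eq_mul_sq_add_one (z := z) (a := p * q') (b := q)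
      (hk.trans (by ring)) (hpq'.mul_dvd_of_dvd_of_dvd hp hq') hq
    exact (hQp (isSquare_natCast_of_dvd (dvd_mul_right p q') h)).elim
  · obtain ⟨u, v, -, h⟩ := exists_mul_sq_eq_mul_sq_add_one (z := z) (a := p) (b := q * q')
      (hk.trans (by ring)) hp (hqq'.mul_dvd_of_dvd_of_dvd hq hq')
    exact .inl ⟨u, v, h⟩

theorem exists_solution_of_sq_eq_mul_sq_add_one {p q q' x y : ℕ} [Fact p.Prime]
    [Fact q.Prime] [Fact q'.Prime] (hD : p * q * q' % 4 = 1)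
    (hpq : p.Coprime q) (hpq' : p.Coprime q') (hqq' : q.Coprime q')
    (hQp : ¬IsSquare (q : ZMod p)) (hQ'p : ¬IsSquare (q' : ZMod p))
    (hm1p : IsSquare (-1 : ZMod p)) (hPq : ¬IsSquare (p : ZMod q))
    (hm1q : ¬IsSquare (-1 : ZMod q)) (hx : 1 < x) (h : x ^ 2 = p * q * q' * y ^ 2 + 1) :
    ∃ u v, q * q' * v ^ 2 = p * u ^ 2 + 1 := by
  induction x using Nat.strong_induction_on generalizing y with
  | _ x ih =>
  obtain ⟨k, z, rfl, hk⟩ := exists_eq_two_mul_add_one_of_sq_eq hD h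
  have hpD : p ∣ p * q * q' := dvd_mul_of_dvd_left (dvd_mul_right p q) q'
  have hpk : p ∣ k := ((Fact.out : p.Prime).dvd_or_dvd_succ hpD hk).resolve_right
    (not_dvd_succ_of_mul_succ_eq hpq hpq' hqq' hQp hQ'p hm1p hPq hm1q hk)
  obtain h | ⟨u, v, hu, hv⟩ :=
    exists_solution_or_pell_of_mul_succ_eq hpq hpq' hqq' hQp hQ'p hk hpk
  · exact h
  exact ih v (by nlinarith) (y := u) (by nlinarith) (by rw [hv, hu])

theorem exists_mul_sq_sub_mul_sq_eq_neg_four {p q q' : ℕ} [Fact p.Prime]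
    [Fact q.Prime] [Fact q'.Prime] (hD : p * q * q' % 4 = 1)
    (hpq : p.Coprime q) (hpq' : p.Coprime q') (hqq' : q.Coprime q')
    (hQp : ¬IsSquare (q : ZMod p)) (hQ'p : ¬IsSquare (q' : ZMod p))
    (hm1p : IsSquare (-1 : ZMod p)) (hPq : ¬IsSquare (p : ZMod q))
    (hm1q : ¬IsSquare (-1 : ZMod q)) :
    ∃ x y : ℤ, (p : ℤ) * x ^ 2 - (q : ℤ) * q' * y ^ 2 = -4 := by
  have hDsq : ¬IsSquare ((p * q * q' : ℕ) : ℤ) := by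
    rw [Int.isSquare_natCast_iff, mul_assoc]
    exact Nat.Prime.not_isSquare_mul Fact.out
      ((Nat.Prime.coprime_iff_not_dvd Fact.out).1 (hpq.mul_right hpq'))
  obtain ⟨a, hax, hay⟩ := Pell.Solution₁.exists_pos_of_not_isSquare
    (Int.natCast_pos.2 (Nat.pos_of_ne_zero fun h0 => by simp [h0] at hD)) hDsq
  obtain ⟨x, hx⟩ : ∃ x : ℕ, (x : ℤ) = a.x := ⟨a.x.toNat, by omega⟩
  obtain ⟨y, hy⟩ : ∃ y : ℕ, (y : ℤ) = a.y := ⟨a.y.toNat, by omega⟩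
  have hpell : x ^ 2 = p * q * q' * y ^ 2 + 1 := by
    have := a.prop
    push_cast at this
    zify
    rw [hx, hy]
    linear_combination this
  obtain ⟨u, v, huv⟩ := exists_solution_of_sq_eq_mul_sq_add_one hD hpq hpq' hqq' hQp hQ'p hm1p
    hPq hm1q (by omega) hpell
  have huvZ : (q : ℤ) * q' * v ^ 2 = p * u ^ 2 + 1 := by exact_mod_cast huv
  exact ⟨2 * u, 2 * v, by linear_combination (-4 : ℤ) * huvZ⟩

theorem mul_sq_sub_mul_sq_ne_four {p q m : ℕ} [Fact q.Prime] (hq : q ≠ 2)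
    (hPq : ¬IsSquare (p : ZMod q)) (x y : ℤ) : (p : ℤ) * x ^ 2 - q * m * y ^ 2 ≠ 4 := by
  intro h
  have h' := congrArg (Int.cast : ℤ → ZMod q) h
  push_cast [ZMod.natCast_self, zero_mul, sub_zero] at h'
  have h2 : (2 : ZMod q) ≠ 0 := Ring.two_ne_zero (by rwa [ZMod.ringChar_zmod_n])
  exact hPq (isSquare_of_mul_sq_eq_sq (v := (x : ZMod q)) h2 (by linear_combination h'))

/-- For primes `p ≡ 5 (mod 8)`, `q ≡ 3 (mod 8)`, `q' ≡ 7 (mod 8)` with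
`(q/p) = (q'/p) = -1`, the equation `p·x² − q·q'·y² = −4` has an integer solution,
while `p·x² − q·q'·y² = 4` has none. -/
theorem pell_like_equation_solvable_iff_minus
    (p q q' : ℕ) [Fact (Nat.Prime p)] [Fact (Nat.Prime q)] [Fact (Nat.Prime q')]
    (hp : p % 8 = 5) (hq : q % 8 = 3) (hq' : q' % 8 = 7)
    (hqp : legendreSym p q = -1) (hq'p : legendreSym p q' = -1) :
    (∃ x y : ℤ, (p : ℤ) * x ^ 2 - (q : ℤ) * q' * y ^ 2 = -4) ∧
      ∀ x y : ℤ, (p : ℤ) * x ^ 2 - (q : ℤ) * q' * y ^ 2 ≠ 4 := by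
  have hD : p * q * q' % 4 = 1 := by
    have h8 : p * q * q' ≡ 5 * 3 * 7 [MOD 8] := Nat.ModEq.mul (Nat.ModEq.mul hp hq) hq'
    unfold Nat.ModEq at h8
    omega
  have hq2 : q ≠ 2 := by omega
  have hQp := (legendreSym.eq_neg_one_iff' p).1 hqp
  have hQ'p := (legendreSym.eq_neg_one_iff' p).1 hq'p
  have hPq : ¬IsSquare (p : ZMod q) := (legendreSym.eq_neg_one_iff' q).1 <| by
    rwa [legendreSym.quadratic_reciprocity_one_mod_four (by omega) hq2]
  have hm1p : IsSquare (-1 : ZMod p) := ZMod.exists_sq_eq_neg_one_iff.2 (by omega)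
  have hm1q : ¬IsSquare (-1 : ZMod q) := fun h => ZMod.exists_sq_eq_neg_one_iff.1 h (by omega)
  have coprime {a b : ℕ} (ha : a.Prime) (hb : b.Prime) (hab : a % 8 ≠ b % 8) : a.Coprime b :=
    (Nat.coprime_primes ha hb).2 fun h => hab (h ▸ rfl)
  have hpq : p.Coprime q := coprime Fact.out Fact.out (by omega)
  have hpq' : p.Coprime q' := coprime Fact.out Fact.out (by omega)
  have hqq' : q.Coprime q' := coprime Fact.out Fact.out (by omega)
  exact ⟨exists_mul_sq_sub_mul_sq_eq_neg_four hD hpq hpq' hqq' hQp hQ'p hm1p hPq hm1q,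
    mul_sq_sub_mul_sq_ne_four hq2 hPq⟩
end

section
/- Let p ≡ 5 (mod 8), q ≡ 3 (mod 8), q' ≡ 7 (mod 8) be primes with (q/p) = (q'/p) = -1, and set m = p·q·q'. The prime ideal 𝔭 = (p, √(-m)) of the ring of integers of k = Q(√(-m)) becomes principal when extended to the ring of integers of the unramified quadratic extension k₄ = Q(√p, √(-q·q')) of k. -/
open NumberField

/-- The prime ideal `𝔭 = (p, √-m)` of `𝓞 k`, `k = ℚ(√-m)`, becomes principal when
extended to the ring of integers of `k₄ = ℚ(√p, √(-q·q'))`. -/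
theorem prime_above_p_capitulates_in_k4
    (p q q' : ℕ) [Fact (Nat.Prime p)] [Fact (Nat.Prime q)] [Fact (Nat.Prime q')]
    (hp : p % 8 = 5) (hq : q % 8 = 3) (hq' : q' % 8 = 7)
    (hqp : legendreSym p q = -1) (hq'p : legendreSym p q' = -1)
    (k : Type) [Field k] [NumberField k] (ω : 𝓞 k)
    (hω : (ω : k) ^ 2 = -((p * q * q' : ℕ) : k))
    (hkgen : Algebra.adjoin ℚ {(ω : k)} = ⊤)
    (K : Type) [Field K] [NumberField K] [Algebra k K] [IsScalarTower ℚ k K]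
    (a b : K) (ha : a ^ 2 = (p : K)) (hb : b ^ 2 = -((q * q' : ℕ) : K))
    (hKgen : Algebra.adjoin ℚ {a, b} = ⊤) :
    (Ideal.map (algebraMap (𝓞 k) (𝓞 K))
      (Ideal.span {(p : 𝓞 k), ω})).IsPrincipal := by
  have hpprime := (Fact.out (p := p.Prime))
  have hpK : (p : K) ≠ 0 := Nat.cast_ne_zero.mpr hpprime.pos.ne'
  have ha0 : a ≠ 0 := by
    intro h; rw [h] at ha; simp at ha; exact hpK ha.symm
  -- image of ω
  set ω' : 𝓞 K := algebraMap (𝓞 k) (𝓞 K) ω with hω'def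
  have hω'K : (ω' : K) = algebraMap k K (ω : k) := rfl
  have hω'sq : (ω' : K) ^ 2 = -((p * q * q' : ℕ) : K) := by
    rw [hω'K, ← map_pow, hω, map_neg, map_natCast]
  -- the element b' = ω'/a
  have hb'sq : ((ω' : K) / a) ^ 2 = -((q * q' : ℕ) : K) := by
    rw [div_pow, hω'sq, ha]
    push_cast
    field_simp
  have haint : IsIntegral ℤ a := by
    apply IsIntegral.of_pow two_pos
    rw [ha, ← map_natCast (algebraMap ℤ K)]
    exact isIntegral_algebraMap
  have hb'int : IsIntegral ℤ ((ω' : K) / a) := by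
    apply IsIntegral.of_pow two_pos
    rw [hb'sq, ← map_natCast (algebraMap ℤ K), ← map_neg]
    exact isIntegral_algebraMap
  set α : 𝓞 K := ⟨a, haint⟩ with hαdef
  set β : 𝓞 K := ⟨(ω' : K) / a, hb'int⟩ with hβdef
  have hαK : (α : K) = a := rfl
  have hβK : (β : K) = (ω' : K) / a := rfl
  -- Bezout
  have hne : p ≠ q := by intro h; rw [h] at hp; omega
  have hne' : p ≠ q' := by intro h; rw [h] at hp; omega
  have hcop : IsCoprime (p : ℤ) ((q * q' : ℕ) : ℤ) := by
    rw [Int.isCoprime_iff_gcd_eq_one, Int.gcd_natCast_natCast]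
    exact Nat.Coprime.mul_right ((Nat.coprime_primes hpprime (Fact.out)).mpr hne)
      ((Nat.coprime_primes hpprime (Fact.out)).mpr hne')
  obtain ⟨u, v, huv⟩ := hcop
  have hc : (u : K) * (p : K) + (v : K) * ((q * q' : ℕ) : K) = 1 := by
    exact_mod_cast congrArg (Int.cast : ℤ → K) huv
  -- the ideal computation
  rw [Ideal.map_span, Set.image_insert_eq, Set.image_singleton, map_natCast]
  have hspan : Ideal.span {(p : 𝓞 K), ω'} = Ideal.span {α} := by
    apply le_antisymm
    · rw [Ideal.span_le]
      intro x hx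
      simp only [Set.mem_insert_iff, Set.mem_singleton_iff] at hx
      rcases hx with rfl | rfl
      · rw [SetLike.mem_coe, Ideal.mem_span_singleton]
        refine ⟨α, ?_⟩
        ext
        push_cast
        show (p : K) = a * a
        rw [← sq, ha]
      · rw [SetLike.mem_coe, Ideal.mem_span_singleton]
        refine ⟨β, ?_⟩
        ext
        push_cast
        show (ω' : K) = a * ((ω' : K) / a)
        field_simp
    · rw [Ideal.span_le, Set.singleton_subset_iff, SetLike.mem_coe,
        Ideal.mem_span_pair]
      refine ⟨(u : 𝓞 K) * α, -((v : 𝓞 K) * β), ?_⟩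
      ext
      push_cast
      show (u : K) * a * (p : K) + -((v : K) * ((ω' : K) / a)) * (ω' : K) = a
      push_cast at hω'sq hc ⊢
      have haa : a * a = (p : K) := by rw [← sq, ha]
      field_simp
      linear_combination (a * a) * hc - (v : K) * hω'sq
        - ((v : K) * (q : K) * (q' : K)) * haa
  rw [hspan]
  exact ⟨α, by simp [Ideal.submodule_span_eq]⟩
end

section
/- Let q be a prime with q ≡ 3 (mod 8). Then there exist integers x and y with x² − q·y² = −2, while the equation x² − q·y² = 2 has no integer solutions. -/
/-!
Let `X + Y√q` be the fundamental solution of `x² - q y² = 1`. If `X = 2k + 1` were odd, then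
`Y = 2c` and `k (k + 1) = q c²` with coprime factors: either `k = q u²`, `k + 1 = v²`, and
`(|v|, |u|)` is a solution with `|u| < Y`, or `k = u²`, `k + 1 = q v²`, and `-1` is a square
mod `q`, impossible as `q ≡ 3 (mod 4)`. So `X` is even and `(X - 1)(X + 1) = q Y²` with coprime
factors, which are `q u², v²` or `u², q v²`; since they differ by `2`, this gives
`v² - q u² = 2`, impossible mod `8`, or `u² - q v² = -2`.
-/

theorem Int.sq_sub_mul_sq_ne_two {d : ℤ} (hd : d % 8 = 3) (x y : ℤ) : x ^ 2 - d * y ^ 2 ≠ 2 := by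
  have hd8 : (d : ZMod 8) = 3 := by
    rw [← ZMod.intCast_mod d 8, Nat.cast_ofNat, hd]; rfl
  have key : ∀ x y : ZMod 8, x ^ 2 - 3 * y ^ 2 ≠ 2 := by decide
  intro h
  apply key x y
  simpa [hd8] using congrArg (Int.cast : ℤ → ZMod 8) h

theorem Pell.Solution₁.even_y_of_odd_x {d : ℤ} (hd : d % 4 = 3) (a : Solution₁ d)
    (hx : Odd a.x) : Even a.y := by
  have hd4 : (d : ZMod 4) = 3 := by
    rw [← ZMod.intCast_mod d 4, Nat.cast_ofNat, hd]; rfl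
  have key : ∀ k j : ZMod 4, (2 * k + 1) ^ 2 - 3 * (2 * j + 1) ^ 2 ≠ 1 := by decide
  obtain ⟨k, hk⟩ := hx
  by_contra hy
  obtain ⟨j, hj⟩ := Int.not_even_iff_odd.mp hy
  apply key k j
  have := a.prop
  rw [hk, hj] at this
  simpa [hd4] using congrArg (Int.cast : ℤ → ZMod 4) this

theorem Int.exists_sq_of_isCoprime_of_mul_eq_sq {m n c : ℤ} (hm : 0 ≤ m) (hmn : IsCoprime m n)
    (h : m * n = c ^ 2) : ∃ a, m = a ^ 2 := by
  obtain ⟨a, ha | ha⟩ := Int.sq_of_isCoprime hmn h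
  · exact ⟨a, ha⟩
  · exact ⟨0, by nlinarith [sq_nonneg a]⟩

theorem Int.exists_sq_of_isCoprime_of_mul_eq_mul_sq_of_dvd {p m n c : ℤ} (hp : 0 < p)
    (hm : 0 ≤ m) (hn : 0 ≤ n) (hmn : IsCoprime m n) (h : m * n = p * c ^ 2) (hpm : p ∣ m) :
    ∃ a b, m = p * a ^ 2 ∧ n = b ^ 2 := by
  obtain ⟨t, rfl⟩ := hpm
  have htn : t * n = c ^ 2 := mul_left_cancel₀ hp.ne' (by rw [← h, mul_assoc])
  have hcop : IsCoprime t n := hmn.of_mul_left_right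
  obtain ⟨a, rfl⟩ := exists_sq_of_isCoprime_of_mul_eq_sq (nonneg_of_mul_nonneg_right hm hp) hcop htn
  obtain ⟨b, rfl⟩ := exists_sq_of_isCoprime_of_mul_eq_sq hn hcop.symm (by rw [mul_comm, htn])
  exact ⟨a, b, rfl, rfl⟩

theorem Int.exists_sq_of_isCoprime_of_mul_eq_prime_mul_sq {p m n c : ℤ} (hp : Prime p)
    (hp0 : 0 < p) (hm : 0 ≤ m) (hn : 0 ≤ n) (hmn : IsCoprime m n) (h : m * n = p * c ^ 2) :
    (∃ a b, m = p * a ^ 2 ∧ n = b ^ 2) ∨ ∃ a b, m = a ^ 2 ∧ n = p * b ^ 2 := by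
  rcases hp.dvd_or_dvd ⟨c ^ 2, h⟩ with hpm | hpn
  · exact .inl (exists_sq_of_isCoprime_of_mul_eq_mul_sq_of_dvd hp0 hm hn hmn h hpm)
  · obtain ⟨b, a, hn, hm⟩ := exists_sq_of_isCoprime_of_mul_eq_mul_sq_of_dvd hp0 hn hm hmn.symm
      (by rw [mul_comm, h]) hpn
    exact .inr ⟨a, b, hm, hn⟩

theorem Int.not_dvd_sq_add_one_of_mod_four_eq_three {p : ℕ} [Fact p.Prime] (hp : p % 4 = 3)
    (a : ℤ) : ¬(p : ℤ) ∣ a ^ 2 + 1 := by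
  intro h
  have : ((a ^ 2 + 1 : ℤ) : ZMod p) = 0 := (ZMod.intCast_zmod_eq_zero_iff_dvd _ p).mpr h
  push_cast at this
  exact ZMod.mod_four_ne_three_of_sq_eq_neg_one (eq_neg_of_add_eq_zero_left this) hp

theorem Pell.IsFundamental.even_x {q : ℕ} [Fact q.Prime] (hq : q % 4 = 3)
    {a : Solution₁ (q : ℤ)} (ha : IsFundamental a) : Even a.x := by
  rw [← Int.not_odd_iff_even]
  intro hx
  obtain ⟨c, hc⟩ := a.even_y_of_odd_x (by omega) hx
  obtain ⟨k, hk⟩ := hx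
  have hk0 : 0 < k := by linarith [ha.1]
  have hc0 : 0 < c := by linarith [ha.2.1]
  have hkk : k * (k + 1) = q * c ^ 2 := by
    have := a.prop
    rw [hk, hc] at this
    linarith
  have hqZ : Prime (q : ℤ) := Nat.prime_iff_prime_int.mp Fact.out
  rcases Int.exists_sq_of_isCoprime_of_mul_eq_prime_mul_sq hqZ (by omega) hk0.le
    (by positivity) ⟨-1, 1, by ring⟩ hkk with ⟨u, v, hu, hv⟩ | ⟨u, v, hu, hv⟩
  · have hv1 : 1 < |v| := (one_lt_sq_iff_one_lt_abs v).mp (by omega)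
    have hu0 : 0 < |u| := abs_pos.mpr (by rintro rfl; simp [hu] at hk0)
    have hcuv : c = |u| * |v| := by
      rw [← abs_of_pos hc0, ← abs_mul, ← sq_eq_sq_iff_abs_eq_abs]
      refine mul_left_cancel₀ hqZ.ne_zero ?_
      rw [← hkk, hv, hu]; ring
    have hy_le := ha.y_le_y (a := .mk |v| |u| (by rw [sq_abs, sq_abs]; linarith)) hv1 hu0
    rw [Solution₁.y_mk, hc] at hy_le
    nlinarith
  · exact Int.not_dvd_sq_add_one_of_mod_four_eq_three hq u ⟨v ^ 2, by rw [← hu, ← hv]⟩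

/-- For a prime `q ≡ 3 (mod 8)`, the equation `x² − q·y² = −2` has an integer
solution, while `x² − q·y² = 2` has none. -/
theorem sq_sub_q_mul_sq_eq_neg_two
    (q : ℕ) [Fact (Nat.Prime q)] (hq : q % 8 = 3) :
    (∃ x y : ℤ, x ^ 2 - (q : ℤ) * y ^ 2 = -2) ∧
      ∀ x y : ℤ, x ^ 2 - (q : ℤ) * y ^ 2 ≠ 2 := by
  have hq8 : (q : ℤ) % 8 = 3 := by omega
  refine ⟨?_, Int.sq_sub_mul_sq_ne_two hq8⟩
  have hqZ : Prime (q : ℤ) := Nat.prime_iff_prime_int.mp Fact.out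
  obtain ⟨a, ha⟩ := Pell.IsFundamental.exists_of_not_isSquare (by omega) hqZ.not_isSquare
  obtain ⟨k, hk⟩ := ha.even_x (by omega)
  have hfac : (a.x - 1) * (a.x + 1) = q * a.y ^ 2 := by linarith [a.prop]
  rcases Int.exists_sq_of_isCoprime_of_mul_eq_prime_mul_sq hqZ (by omega)
    (by linarith [ha.1]) (by linarith [ha.1]) ⟨k, 1 - k, by rw [hk]; ring⟩ hfac
    with ⟨u, v, hu, hv⟩ | ⟨u, v, hu, hv⟩
  · exact absurd (by linarith) (Int.sq_sub_mul_sq_ne_two hq8 v u)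
  · exact ⟨u, v, by linarith⟩
end

section
/- Every nonabelian subgroup G of GL(2, Z/3Z) whose exponent divides 4 has order 8 and is isomorphic either to the dihedral group of order 8 or to the quaternion group of order 8. -/
namespace GL23aux

set_option maxRecDepth 100000
set_option synthInstance.maxSize 2000
set_option synthInstance.maxHeartbeats 1000000

abbrev V : Type := ZMod 3 × ZMod 3 × ZMod 3 × ZMod 3

def vmul : V → V → V := fun (a,b,c,d) (e,f,g,h) =>
  (a*e+b*g, a*f+b*h, c*e+d*g, c*f+d*h)

def vone : V := (1,0,0,1)

def v4 (x : V) : V := vmul (vmul (vmul x x) x) x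
def v3 (x : V) : V := vmul (vmul x x) x

abbrev Mat := Matrix (Fin 2) (Fin 2) (ZMod 3)

def toMat : V → Mat := fun (a,b,c,d) => !![a,b;c,d]
def tup : Mat → V := fun A => (A 0 0, A 0 1, A 1 0, A 1 1)

lemma toMat_vmul (x y : V) : toMat (vmul x y) = toMat x * toMat y := by
  obtain ⟨a,b,c,d⟩ := x; obtain ⟨e,f,g,h⟩ := y
  simp [toMat, vmul, Matrix.mul_fin_two]

lemma toMat_vone : toMat vone = 1 := by
  simp [toMat, vone, Matrix.one_fin_two]

lemma tup_toMat (x : V) : tup (toMat x) = x := rfl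

lemma toMat_tup (A : Mat) : toMat (tup A) = A := (Matrix.etaExpand_eq A) ▸ rfl

lemma tup_inj {A B : Mat} (h : tup A = tup B) : A = B := by
  rw [← toMat_tup A, ← toMat_tup B, h]

lemma tup_mul (A B : Mat) : tup (A * B) = vmul (tup A) (tup B) := by
  have h : toMat (vmul (tup A) (tup B)) = A * B := by
    rw [toMat_vmul, toMat_tup, toMat_tup]
  rw [← h, tup_toMat]

lemma tup_one : tup (1 : Mat) = vone := by
  have h : toMat vone = (1 : Mat) := toMat_vone
  rw [← h, tup_toMat]

abbrev M : Type := Matrix.GeneralLinearGroup (Fin 2) (ZMod 3)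

def t (g : M) : V := tup (g : Mat)

lemma t_mul (g h : M) : t (g * h) = vmul (t g) (t h) := by
  simp only [t, Units.val_mul, tup_mul]

lemma t_one : t (1 : M) = vone := by
  simp only [t, Units.val_one, tup_one]

lemma t_inj {g h : M} (h' : t g = t h) : g = h :=
  Units.ext (tup_inj h')

lemma t_pow4 (g : M) : t (g ^ 4) = v4 (t g) := by
  have h4 : g ^ 4 = ((g*g)*g)*g := by
    rw [pow_succ, pow_succ, pow_succ, pow_one]
  rw [h4, v4, t_mul, t_mul, t_mul]

lemma t_pow3 (g : M) : t (g ^ 3) = v3 (t g) := by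
  have h3 : g ^ 3 = (g*g)*g := by
    rw [pow_succ, pow_succ, pow_one]
  rw [h3, v3, t_mul, t_mul]

def K1 : List V := [(0,1,1,0),(0,1,2,0),(0,2,1,0),(0,2,2,0),(1,0,0,1),(1,0,0,2),(2,0,0,1),(2,0,0,2)]
def K2 : List V := [(1,0,0,1),(1,0,2,2),(1,2,0,2),(1,2,2,2),(2,0,0,2),(2,0,1,1),(2,1,0,1),(2,1,1,1)]
def K3 : List V := [(1,0,0,1),(1,0,1,2),(1,1,0,2),(1,1,1,2),(2,0,0,2),(2,0,2,1),(2,2,0,1),(2,2,2,1)]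
def K4 : List V := [(0,1,2,0),(0,2,1,0),(1,0,0,1),(1,1,1,2),(1,2,2,2),(2,0,0,2),(2,1,1,1),(2,2,2,1)]

lemma factA : ∀ x y : V, v4 x = vone → v4 y = vone → vmul x y ≠ vmul y x →
    v4 (vmul x y) = vone → v4 (vmul x (vmul y (vmul y y))) = vone →
    v4 (vmul (vmul x x) y) = vone →
    (x ∈ K1 ∧ y ∈ K1) ∨ (x ∈ K2 ∧ y ∈ K2) ∨ (x ∈ K3 ∧ y ∈ K3) ∨ (x ∈ K4 ∧ y ∈ K4) := by
  decide

end GL23aux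

namespace GL23aux
set_option maxRecDepth 100000
set_option synthInstance.maxSize 2000
set_option synthInstance.maxHeartbeats 1000000

def wl (x y : V) : ℕ → List V
  | 0 => [vone]
  | n+1 => let L := wl x y n; L ++ L.map (fun z => vmul z x) ++ L.map (fun z => vmul z y)


lemma factSub1 : vone ∈ K1 ∧ (∀ x ∈ K1, ∀ y ∈ K1, vmul x y ∈ K1) ∧
    (∀ x ∈ K1, v4 x = vone) := by decide

lemma factB1 : ∀ x : V, v4 x = vone → (∀ h ∈ K1, v4 (vmul x h) = vone) → x ∈ K1 := by decide

lemma factC1 : ∀ x ∈ K1, ∀ y ∈ K1, vmul x y ≠ vmul y x → ∀ k ∈ K1, k ∈ wl x y 4 := by decide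


lemma factSub2 : vone ∈ K2 ∧ (∀ x ∈ K2, ∀ y ∈ K2, vmul x y ∈ K2) ∧
    (∀ x ∈ K2, v4 x = vone) := by decide

lemma factB2 : ∀ x : V, v4 x = vone → (∀ h ∈ K2, v4 (vmul x h) = vone) → x ∈ K2 := by decide

lemma factC2 : ∀ x ∈ K2, ∀ y ∈ K2, vmul x y ≠ vmul y x → ∀ k ∈ K2, k ∈ wl x y 4 := by decide


lemma factSub3 : vone ∈ K3 ∧ (∀ x ∈ K3, ∀ y ∈ K3, vmul x y ∈ K3) ∧
    (∀ x ∈ K3, v4 x = vone) := by decide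

lemma factB3 : ∀ x : V, v4 x = vone → (∀ h ∈ K3, v4 (vmul x h) = vone) → x ∈ K3 := by decide

lemma factC3 : ∀ x ∈ K3, ∀ y ∈ K3, vmul x y ≠ vmul y x → ∀ k ∈ K3, k ∈ wl x y 4 := by decide


lemma factSub4 : vone ∈ K4 ∧ (∀ x ∈ K4, ∀ y ∈ K4, vmul x y ∈ K4) ∧
    (∀ x ∈ K4, v4 x = vone) := by decide

lemma factB4 : ∀ x : V, v4 x = vone → (∀ h ∈ K4, v4 (vmul x h) = vone) → x ∈ K4 := by decide

lemma factC4 : ∀ x ∈ K4, ∀ y ∈ K4, vmul x y ≠ vmul y x → ∀ k ∈ K4, k ∈ wl x y 4 := by decide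

end GL23aux

namespace GL23aux
set_option maxRecDepth 100000
set_option synthInstance.maxSize 2000
set_option synthInstance.maxHeartbeats 1000000

lemma v4_eq (x : V) : v4 x = vmul (v3 x) x := rfl

/-- Build a unit from an element with fourth power one. -/
def kunit (k : V) (hk4 : v4 k = vone) : M :=
  ⟨toMat k, toMat (v3 k),
    by
      have h : toMat (v3 k) * toMat k = 1 := by
        rw [← toMat_vmul, ← v4_eq, hk4, toMat_vone]
      have h3 : toMat (v3 k) = (toMat k * toMat k) * toMat k := by
        rw [← toMat_vmul, ← toMat_vmul]; rfl
      calc toMat k * toMat (v3 k)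
          = toMat k * ((toMat k * toMat k) * toMat k) := by rw [h3]
        _ = ((toMat k * toMat k) * toMat k) * toMat k := by
              rw [mul_assoc, mul_assoc, mul_assoc]
        _ = toMat (v3 k) * toMat k := by rw [h3]
        _ = 1 := h,
    by rw [← toMat_vmul, ← v4_eq, hk4, toMat_vone]⟩

lemma t_kunit (k : V) (hk4 : v4 k = vone) : t (kunit k hk4) = k := tup_toMat k

/-- The subgroup of `GL(2,3)` given by a list of tuples. -/
def KG (K : List V) (h1 : vone ∈ K) (hmul : ∀ x ∈ K, ∀ y ∈ K, vmul x y ∈ K)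
    (h4 : ∀ x ∈ K, v4 x = vone) : Subgroup M where
  carrier := {g | t g ∈ K}
  one_mem' := by simpa [t_one] using h1
  mul_mem' := fun {g h} hg hh => by
    simpa [Set.mem_setOf_eq, t_mul] using hmul _ hg _ hh
  inv_mem' := fun {g} hg => by
    have hg4 : g ^ 4 = 1 := t_inj (by rw [t_pow4, h4 _ hg, t_one])
    have hinv : g⁻¹ = g ^ 3 := by
      have : g * g ^ 3 = 1 := by rw [← pow_succ']; exact hg4
      exact inv_eq_of_mul_eq_one_right this
    show t g⁻¹ ∈ K
    rw [hinv, t_pow3, v3]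
    exact hmul _ (hmul _ hg _ hg) _ hg

lemma mem_KG {K : List V} {h1 hmul h4} (g : M) :
    g ∈ KG K h1 hmul h4 ↔ t g ∈ K := Iff.rfl

lemma wl_closure (a b : M) : ∀ n, ∀ k ∈ wl (t a) (t b) n,
    ∃ u : M, u ∈ Subgroup.closure {a, b} ∧ t u = k := by
  intro n
  induction n with
  | zero =>
    intro k hk
    simp only [wl, List.mem_singleton] at hk
    exact ⟨1, one_mem _, by rw [hk, t_one]⟩
  | succ n ih =>
    intro k hk
    simp only [wl, List.mem_append, List.mem_map] at hk
    rcases hk with (hk | ⟨z, hz, rfl⟩) | ⟨z, hz, rfl⟩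
    · exact ih k hk
    · obtain ⟨u, hu, rfl⟩ := ih z hz
      exact ⟨u * a, mul_mem hu (Subgroup.subset_closure (by simp)), (t_mul u a)⟩
    · obtain ⟨u, hu, rfl⟩ := ih z hz
      exact ⟨u * b, mul_mem hu (Subgroup.subset_closure (by simp)), (t_mul u b)⟩

lemma subgroup_eq (G : Subgroup M) (K : List V)
    (h1 : vone ∈ K) (hmul : ∀ x ∈ K, ∀ y ∈ K, vmul x y ∈ K)
    (h4 : ∀ x ∈ K, v4 x = vone)
    (hB : ∀ x : V, v4 x = vone → (∀ h ∈ K, v4 (vmul x h) = vone) → x ∈ K)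
    (hC : ∀ x ∈ K, ∀ y ∈ K, vmul x y ≠ vmul y x → ∀ k ∈ K, k ∈ wl x y 4)
    (a b : M) (haG : a ∈ G) (hbG : b ∈ G) (hab : a * b ≠ b * a)
    (ha : t a ∈ K) (hb : t b ∈ K)
    (hexp : ∀ g ∈ G, g ^ 4 = 1) :
    G = KG K h1 hmul h4 := by
  have vne : vmul (t a) (t b) ≠ vmul (t b) (t a) := fun h =>
    hab (t_inj (by rw [t_mul, t_mul, h]))
  have hcl : Subgroup.closure {a, b} ≤ G := by
    rw [Subgroup.closure_le]
    intro x hx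
    rcases hx with rfl | hx
    · exact haG
    · simp only [Set.mem_singleton_iff] at hx; subst hx; exact hbG
  have KleG : ∀ k ∈ K, ∃ u ∈ G, t u = k := by
    intro k hk
    obtain ⟨u, hu, htu⟩ := wl_closure a b 4 k (hC _ ha _ hb vne k hk)
    exact ⟨u, hcl hu, htu⟩
  apply le_antisymm
  · intro g hg
    show t g ∈ K
    apply hB
    · rw [← t_pow4, hexp g hg, t_one]
    · intro h hh
      obtain ⟨u, huG, rfl⟩ := KleG h hh
      rw [← t_mul, ← t_pow4, hexp _ (mul_mem hg huG), t_one]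
  · intro u hu
    obtain ⟨u', hu'G, htu⟩ := KleG (t u) hu
    exact (t_inj htu) ▸ hu'G

lemma iso_of_map {H : Type} [Group H] (K : List V)
    (h1 : vone ∈ K) (hmul : ∀ x ∈ K, ∀ y ∈ K, vmul x y ∈ K)
    (h4 : ∀ x ∈ K, v4 x = vone)
    (f : H → V) (hfone : f 1 = vone) (hfmul : ∀ p q, f (p*q) = vmul (f p) (f q))
    (hfinj : ∀ p q : H, f p = f q → p = q) (hfmem : ∀ p, f p ∈ K)
    (hfsurj : ∀ k ∈ K, ∃ p, f p = k) :
    Nonempty (H ≃* KG K h1 hmul h4) := by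
  let F : H →* (KG K h1 hmul h4) := MonoidHom.mk'
    (fun p => ⟨kunit (f p) (h4 _ (hfmem p)), by
      show t _ ∈ K; rw [t_kunit]; exact hfmem p⟩)
    (fun p q => by
      apply Subtype.ext; apply Units.ext
      show toMat (f (p*q)) = toMat (f p) * toMat (f q)
      rw [hfmul, toMat_vmul])
  refine ⟨MulEquiv.ofBijective F ⟨?_, ?_⟩⟩
  · intro p q hpq
    apply hfinj
    have h1' : toMat (f p) = toMat (f q) :=
      congrArg (fun z : (KG K h1 hmul h4) => ((z : M) : Mat)) hpq
    have h2' := congrArg tup h1'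
    rwa [tup_toMat, tup_toMat] at h2'
  · rintro ⟨u, hu⟩
    obtain ⟨p, hp⟩ := hfsurj (t u) hu
    refine ⟨p, ?_⟩
    apply Subtype.ext; apply Units.ext
    show toMat (f p) = (u : Mat)
    rw [hp]; exact toMat_tup _

end GL23aux

namespace GL23aux
set_option maxRecDepth 100000
set_option synthInstance.maxSize 2000
set_option synthInstance.maxHeartbeats 1000000

def pws (x : V) : ℕ → V
  | 0 => vone
  | n+1 => vmul (pws x n) x

def fd1 : DihedralGroup 4 → V
  | DihedralGroup.r i => pws (0,1,2,0) i.val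
  | DihedralGroup.sr i => vmul (0,1,1,0) (pws (0,1,2,0) i.val)

def fd2 : DihedralGroup 4 → V
  | DihedralGroup.r i => pws (1,2,2,2) i.val
  | DihedralGroup.sr i => vmul (1,0,2,2) (pws (1,2,2,2) i.val)

def fd3 : DihedralGroup 4 → V
  | DihedralGroup.r i => pws (1,1,1,2) i.val
  | DihedralGroup.sr i => vmul (1,0,1,2) (pws (1,1,1,2) i.val)

def fq4 : QuaternionGroup 2 → V
  | QuaternionGroup.a i => pws (0,1,2,0) i.val
  | QuaternionGroup.xa i => vmul (1,1,1,2) (pws (0,1,2,0) i.val)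

lemma factD1 : fd1 1 = vone ∧ (∀ p q, fd1 (p*q) = vmul (fd1 p) (fd1 q)) ∧
    (∀ p q, fd1 p = fd1 q → p = q) ∧ (∀ p, fd1 p ∈ K1) ∧
    (∀ k ∈ K1, ∃ p, fd1 p = k) := by decide

lemma factD2 : fd2 1 = vone ∧ (∀ p q, fd2 (p*q) = vmul (fd2 p) (fd2 q)) ∧
    (∀ p q, fd2 p = fd2 q → p = q) ∧ (∀ p, fd2 p ∈ K2) ∧
    (∀ k ∈ K2, ∃ p, fd2 p = k) := by decide

lemma factD3 : fd3 1 = vone ∧ (∀ p q, fd3 (p*q) = vmul (fd3 p) (fd3 q)) ∧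
    (∀ p q, fd3 p = fd3 q → p = q) ∧ (∀ p, fd3 p ∈ K3) ∧
    (∀ k ∈ K3, ∃ p, fd3 p = k) := by decide

lemma factQ4 : fq4 1 = vone ∧ (∀ p q, fq4 (p*q) = vmul (fq4 p) (fq4 q)) ∧
    (∀ p q, fq4 p = fq4 q → p = q) ∧ (∀ p, fq4 p ∈ K4) ∧
    (∀ k ∈ K4, ∃ p, fq4 p = k) := by decide

end GL23aux

open GL23aux in
/-- Every nonabelian subgroup of `GL(2, ℤ/3)` of exponent dividing 4 has order 8 and
is isomorphic to the dihedral group of order 8 or to the quaternion group. -/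
theorem nonabelian_exponent_four_subgroup_of_GL2_ZMod3
    (G : Subgroup (Matrix.GeneralLinearGroup (Fin 2) (ZMod 3)))
    (hna : ¬ ∀ a b : G, a * b = b * a)
    (hexp : ∀ g : G, g ^ 4 = 1) :
    Nat.card G = 8 ∧
      (Nonempty (G ≃* DihedralGroup 4) ∨ Nonempty (G ≃* QuaternionGroup 2)) := by
  push_neg at hna
  obtain ⟨a, b, hab⟩ := hna
  have hexp' : ∀ g ∈ G, g ^ 4 = 1 := by
    intro g hg
    have h := hexp ⟨g, hg⟩
    have h2 := congrArg (fun z : G => (z : M)) h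
    simpa using h2
  have habM : (a : M) * (b : M) ≠ (b : M) * (a : M) := by
    intro h
    apply hab
    exact Subtype.ext h
  have hx4 : v4 (t (a : M)) = vone := by
    rw [← t_pow4, hexp' _ a.2, t_one]
  have hy4 : v4 (t (b : M)) = vone := by
    rw [← t_pow4, hexp' _ b.2, t_one]
  have vne : vmul (t (a : M)) (t (b : M)) ≠ vmul (t (b : M)) (t (a : M)) := by
    intro h
    exact habM (t_inj (by rw [t_mul, t_mul, h]))
  have hp1 : v4 (vmul (t (a : M)) (t (b : M))) = vone := by
    rw [← t_mul, ← t_pow4, hexp' _ (mul_mem a.2 b.2), t_one]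
  have hp2 : v4 (vmul (t (a : M)) (vmul (t (b : M)) (vmul (t (b : M)) (t (b : M))))) = vone := by
    rw [← t_mul, ← t_mul, ← t_mul, ← t_pow4,
      hexp' _ (mul_mem a.2 (mul_mem b.2 (mul_mem b.2 b.2))), t_one]
  have hp3 : v4 (vmul (vmul (t (a : M)) (t (a : M))) (t (b : M))) = vone := by
    rw [← t_mul, ← t_mul, ← t_pow4, hexp' _ (mul_mem (mul_mem a.2 a.2) b.2), t_one]
  have hcard8 : Nat.card (DihedralGroup 4) = 8 := by
    rw [Nat.card_eq_fintype_card, DihedralGroup.card]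
  have hcardQ : Nat.card (QuaternionGroup 2) = 8 := by
    rw [Nat.card_eq_fintype_card, QuaternionGroup.card]
  rcases factA _ _ hx4 hy4 vne hp1 hp2 hp3 with ⟨ha, hb⟩ | ⟨ha, hb⟩ | ⟨ha, hb⟩ | ⟨ha, hb⟩
  · obtain ⟨hS1, hS2, hS3⟩ := factSub1
    obtain ⟨hf1, hf2, hf3, hf4, hf5⟩ := factD1
    have hG : G = KG K1 hS1 hS2 hS3 :=
      subgroup_eq G K1 hS1 hS2 hS3 factB1 factC1 _ _ a.2 b.2 habM ha hb hexp'
    obtain ⟨e⟩ := iso_of_map K1 hS1 hS2 hS3 fd1 hf1 hf2 hf3 hf4 hf5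
    have eq : G ≃* DihedralGroup 4 := (MulEquiv.subgroupCongr hG).trans e.symm
    exact ⟨by rw [Nat.card_congr eq.toEquiv, hcard8], Or.inl ⟨eq⟩⟩
  · obtain ⟨hS1, hS2, hS3⟩ := factSub2
    obtain ⟨hf1, hf2, hf3, hf4, hf5⟩ := factD2
    have hG : G = KG K2 hS1 hS2 hS3 :=
      subgroup_eq G K2 hS1 hS2 hS3 factB2 factC2 _ _ a.2 b.2 habM ha hb hexp'
    obtain ⟨e⟩ := iso_of_map K2 hS1 hS2 hS3 fd2 hf1 hf2 hf3 hf4 hf5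
    have eq : G ≃* DihedralGroup 4 := (MulEquiv.subgroupCongr hG).trans e.symm
    exact ⟨by rw [Nat.card_congr eq.toEquiv, hcard8], Or.inl ⟨eq⟩⟩
  · obtain ⟨hS1, hS2, hS3⟩ := factSub3
    obtain ⟨hf1, hf2, hf3, hf4, hf5⟩ := factD3
    have hG : G = KG K3 hS1 hS2 hS3 :=
      subgroup_eq G K3 hS1 hS2 hS3 factB3 factC3 _ _ a.2 b.2 habM ha hb hexp'
    obtain ⟨e⟩ := iso_of_map K3 hS1 hS2 hS3 fd3 hf1 hf2 hf3 hf4 hf5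
    have eq : G ≃* DihedralGroup 4 := (MulEquiv.subgroupCongr hG).trans e.symm
    exact ⟨by rw [Nat.card_congr eq.toEquiv, hcard8], Or.inl ⟨eq⟩⟩
  · obtain ⟨hS1, hS2, hS3⟩ := factSub4
    obtain ⟨hf1, hf2, hf3, hf4, hf5⟩ := factQ4
    have hG : G = KG K4 hS1 hS2 hS3 :=
      subgroup_eq G K4 hS1 hS2 hS3 factB4 factC4 _ _ a.2 b.2 habM ha hb hexp'
    obtain ⟨e⟩ := iso_of_map K4 hS1 hS2 hS3 fq4 hf1 hf2 hf3 hf4 hf5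
    have eq : G ≃* QuaternionGroup 2 := (MulEquiv.subgroupCongr hG).trans e.symm
    exact ⟨by rw [Nat.card_congr eq.toEquiv, hcardQ], Or.inr ⟨eq⟩⟩
end

section
/- For an integer n ≥ 1, let Γ_n be the group with presentation ⟨ρ, σ, τ | ρ⁴ = σ^{2^{n+1}} = τ⁴ = 1, ρ² = σ^{2^n}·τ², [σ,τ] = 1, [ρ,σ] = σ², [ρ,τ] = σ^{2^n}·τ²⟩. Then Γ_n is a finite group of order 2^{n+4}, its abelianization is isomorphic to (Z/2Z)³, and its commutator subgroup is abelian, isomorphic to (Z/2Z) × (Z/2^n Z). -/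
namespace GammaPresentation

/-- The paper's commutator convention `[a,b] = a⁻¹b⁻¹ab`. -/
def comm {G : Type*} [Group G] (a b : G) : G := a⁻¹ * b⁻¹ * a * b

/-- Generators `ρ`, `σ`, `τ` of the free group on three letters. -/
def ρ : FreeGroup (Fin 3) := FreeGroup.of 0

def σ : FreeGroup (Fin 3) := FreeGroup.of 1

def τ : FreeGroup (Fin 3) := FreeGroup.of 2

/-- The relations `ρ⁴ = σ^(2^(n+1)) = τ⁴ = 1`, `ρ² = σ^(2^n)·τ²`, `[σ,τ] = 1`,
`[ρ,σ] = σ²`, `[ρ,τ] = σ^(2^n)·τ²` defining `Γ_n`. -/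
def rels (n : ℕ) : Set (FreeGroup (Fin 3)) :=
  {ρ ^ 4, σ ^ 2 ^ (n + 1), τ ^ 4,
    ρ ^ 2 * (σ ^ 2 ^ n * τ ^ 2)⁻¹,
    comm σ τ,
    comm ρ σ * (σ ^ 2)⁻¹,
    comm ρ τ * (σ ^ 2 ^ n * τ ^ 2)⁻¹}

/-- The group `Γ_n` given by the above presentation. -/
def Gamma (n : ℕ) : Type := PresentedGroup (rels n)

instance (n : ℕ) : Group (Gamma n) := by unfold Gamma; infer_instance

end GammaPresentation

/-!
The elements `σ` and `τ` commute, so they generate an abelian normal subgroup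
`N ≅ ℤ/2^(n+1) × ℤ/4`; conjugation by `ρ` acts on it by the involution `σ ↦ σ⁻¹`,
`τ ↦ σ^(2^n) τ⁻¹`, and `ρ² = σ^(2^n) τ²` is fixed by it. So `Γ_n` is the index-two extension of
`N` determined by this action and by `ρ²`. This extension can be written down explicitly on
`N × C₂`, and it has order `2^(n+4)`. The presentation gives a homomorphism into the explicit
model, and the universal property of the extension gives its inverse.

In the model, `x t^c ↦ (x mod 2, c)` maps onto `(ℤ/2)³`, and its kernel has order `2^(n+1)`.
The kernel is generated by the commutators `[ρ,τ] = ρ²` and `[ρ,σ] = σ²`, which have orders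
`2` and `2^n`, so it is the commutator subgroup and is isomorphic to `ℤ/2 × ℤ/2^n`.
-/

open Multiplicative

namespace GammaPresentation

section Comm

open scoped commutatorElement

variable {G H : Type*} [Group G] [Group H]

lemma comm_eq_commutatorElement (a b : G) : comm a b = ⁅a⁻¹, b⁻¹⁆ := by
  simp [comm, commutatorElement_def]

lemma comm_mem_commutator (a b : G) : comm a b ∈ commutator G := by
  rw [comm_eq_commutatorElement, commutator_def]
  exact Subgroup.commutator_mem_commutator (Subgroup.mem_top _) (Subgroup.mem_top _)

lemma comm_eq_one_iff {a b : G} : comm a b = 1 ↔ Commute a b := by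
  rw [comm_eq_commutatorElement, commutatorElement_eq_one_iff_commute, Commute.inv_inv_iff]

@[simp]
lemma map_comm (f : G →* H) (a b : G) : f (comm a b) = comm (f a) (f b) := by
  simp [comm]

lemma inv_mul_mul_eq_of_comm_eq {a b c : G} (h : comm a b = c) : a⁻¹ * b * a = b * c⁻¹ := by
  rw [← h, comm]
  group

end Comm

end GammaPresentation

def MulEquiv.commutatorCongr {G H : Type*} [Group G] [Group H] (e : G ≃* H) :
    commutator G ≃* commutator H :=
  (e.subgroupMap _).trans <| MulEquiv.subgroupCongr <| by
    rw [map_commutator_eq, MonoidHom.range_eq_top.mpr e.surjective, commutator_def]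

noncomputable def Abelianization.equivOfKerEq {G A : Type*} [Group G] [CommGroup A] (f : G →* A)
    (hf : Function.Surjective f) (hker : f.ker = commutator G) : Abelianization G ≃* A :=
  (QuotientGroup.quotientMulEquivOfEq hker.symm).trans
    (QuotientGroup.quotientKerEquivOfSurjective f hf)

lemma ofAdd_one_pow_val {k : ℕ} [NeZero k] (u : Multiplicative (ZMod k)) :
    ofAdd (1 : ZMod k) ^ (toAdd u).val = u := by
  rw [← ofAdd_nsmul, nsmul_one, ZMod.natCast_zmod_val, ofAdd_toAdd]

section ZModProd

variable {k l : ℕ} [NeZero k] [NeZero l] {G : Type*} [Group G]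

lemma ofAdd_eq_pow_mul_pow (x : ZMod k × ZMod l) :
    ofAdd x = ofAdd (1, 0) ^ x.1.val * ofAdd (0, 1) ^ x.2.val := by
  rw [← ofAdd_nsmul, ← ofAdd_nsmul, ← ofAdd_add]
  ext <;> simp

lemma MonoidHom.ext_zmodProd {f₁ f₂ : Multiplicative (ZMod k × ZMod l) →* G}
    (h₁ : f₁ (ofAdd (1, 0)) = f₂ (ofAdd (1, 0))) (h₂ : f₁ (ofAdd (0, 1)) = f₂ (ofAdd (0, 1))) :
    f₁ = f₂ := by
  refine MonoidHom.ext fun x => ?_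
  rw [← ofAdd_toAdd x, ofAdd_eq_pow_mul_pow]
  simp [h₁, h₂]

def zmodProdHom (g h : G) (hg : g ^ k = 1) (hh : h ^ l = 1) (hgh : Commute g h) :
    Multiplicative (ZMod k × ZMod l) →* G where
  toFun x := g ^ (toAdd x).1.val * h ^ (toAdd x).2.val
  map_one' := by simp
  map_mul' x y := by
    simp only [toAdd_mul, Prod.fst_add, Prod.snd_add, ZMod.val_add, ← pow_eq_pow_mod _ hg,
      ← pow_eq_pow_mod _ hh, pow_add]
    rw [mul_assoc, mul_assoc, (hgh.pow_pow _ _).left_comm]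

variable {g h : G} {hg : g ^ k = 1} {hh : h ^ l = 1} {hgh : Commute g h}

lemma zmodProdHom_apply_natCast (a b : ℕ) :
    zmodProdHom g h hg hh hgh (ofAdd ((a : ZMod k), (b : ZMod l))) = g ^ a * h ^ b := by
  simp [zmodProdHom, ← pow_eq_pow_mod _ hg, ← pow_eq_pow_mod _ hh]

@[simp]
lemma zmodProdHom_ofAdd_one_zero : zmodProdHom g h hg hh hgh (ofAdd (1, 0)) = g := by
  simpa using zmodProdHom_apply_natCast (hgh := hgh) 1 0

@[simp]
lemma zmodProdHom_ofAdd_zero_one : zmodProdHom g h hg hh hgh (ofAdd (0, 1)) = h := by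
  simpa using zmodProdHom_apply_natCast (hgh := hgh) 0 1

end ZModProd

def zmodScale {k m : ℕ} (d : ℕ) (h : m ∣ k * d) : ZMod k →+ ZMod m :=
  ZMod.lift k ⟨zmultiplesHom (ZMod m) (d : ZMod m), by
    simpa [← Nat.cast_mul, ZMod.natCast_eq_zero_iff] using h⟩

section ZModScale

variable {k m d : ℕ} {h : m ∣ k * d}

lemma zmodScale_intCast (x : ℤ) : zmodScale d h x = x * d := by
  simp [zmodScale]

@[simp]
lemma zmodScale_one : zmodScale d h 1 = d := by
  simpa using zmodScale_intCast (h := h) 1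

lemma zmodScale_injective (hd : d ≠ 0) (hm : k * d ∣ m) : Function.Injective (zmodScale d h) := by
  rw [zmodScale, ZMod.lift_injective]
  intro z hz
  have hmz : (m : ℤ) ∣ z * d := by
    rw [← ZMod.intCast_zmod_eq_zero_iff_dvd]
    simpa using hz
  rw [ZMod.intCast_zmod_eq_zero_iff_dvd, ← mul_dvd_mul_iff_right (Int.natCast_ne_zero.mpr hd)]
  exact dvd_trans (by exact_mod_cast hm) hmz

end ZModScale

/-- The data of an extension of the abelian group `N` by a group `C₂ = ⟨t⟩` of order two:
`t` acts on `N` by the involution `φ`, and `t ^ 2 = r`. -/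
structure IndexTwoData (N : Type*) [AddCommGroup N] where
  φ : N →+ N
  r : N
  φ_φ : ∀ x, φ (φ x) = x
  φ_r : φ r = r

namespace IndexTwoData

variable {N : Type*} [AddCommGroup N] (D : IndexTwoData N)

/-- `⟨x, c⟩` stands for `x * t ^ c`. -/
@[ext]
structure Ext (D : IndexTwoData N) where
  x : N
  c : Bool

instance : Mul D.Ext :=
  ⟨fun p q => ⟨p.x + cond p.c (D.φ q.x) q.x + cond (p.c && q.c) D.r 0, xor p.c q.c⟩⟩

instance : One D.Ext := ⟨⟨0, false⟩⟩

instance : Inv D.Ext := ⟨fun p => ⟨cond p.c (-D.φ p.x - D.r) (-p.x), p.c⟩⟩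

lemma mk_mul_mk (x y : N) (c d : Bool) :
    (⟨x, c⟩ * ⟨y, d⟩ : D.Ext) = ⟨x + cond c (D.φ y) y + cond (c && d) D.r 0, xor c d⟩ := rfl

lemma one_def : (1 : D.Ext) = ⟨0, false⟩ := rfl

lemma inv_mk (x : N) (c : Bool) : (⟨x, c⟩ : D.Ext)⁻¹ = ⟨cond c (-D.φ x - D.r) (-x), c⟩ := rfl

instance : Group D.Ext :=
  Group.ofLeftAxioms
    (by
      rintro ⟨x, c⟩ ⟨y, d⟩ ⟨z, e⟩
      cases c <;> cases d <;> cases e <;>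
        simp only [mk_mul_mk, Ext.mk.injEq, cond_true, cond_false, Bool.and_true,
          Bool.and_false, Bool.xor_true, Bool.xor_false, Bool.not_true, Bool.not_false,
          map_add, D.φ_φ, D.φ_r, map_zero, and_true] <;>
        abel)
    (by rintro ⟨x, c⟩; cases c <;> simp [one_def, mk_mul_mk])
    (by
      rintro ⟨x, c⟩
      cases c <;> ext <;> simp [inv_mk, mk_mul_mk, one_def]
      abel)

def incl : Multiplicative N →* D.Ext where
  toFun x := ⟨toAdd x, false⟩
  map_one' := rfl
  map_mul' x y := by simp [mk_mul_mk]

lemma incl_injective : Function.Injective D.incl := fun _ _ h => congrArg Ext.x h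

def t : D.Ext := ⟨0, true⟩

lemma mk_eq_incl_mul (x : N) (c : Bool) :
    (⟨x, c⟩ : D.Ext) = D.incl (ofAdd x) * cond c D.t 1 := by
  cases c <;> simp [incl, t, one_def, mk_mul_mk]

lemma t_sq : D.t ^ 2 = D.incl (ofAdd D.r) := by
  simp [pow_two, incl, t, mk_mul_mk]

lemma t_inv_mul_incl_mul_t (x : N) :
    D.t⁻¹ * D.incl (ofAdd x) * D.t = D.incl (ofAdd (D.φ x)) := by
  simp [incl, t, inv_mk, mk_mul_mk]

lemma comm_t_incl (x : N) :
    GammaPresentation.comm D.t (D.incl (ofAdd x)) = D.incl (ofAdd (x - D.φ x)) := by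
  rw [GammaPresentation.comm, ← map_inv, ← ofAdd_neg, t_inv_mul_incl_mul_t, ← map_mul,
    ← ofAdd_add, map_neg, neg_add_eq_sub]

def equivProd : D.Ext ≃ N × Bool where
  toFun p := (p.x, p.c)
  invFun p := ⟨p.1, p.2⟩

instance [Finite N] : Finite D.Ext := .of_equiv _ D.equivProd.symm

lemma card_ext : Nat.card D.Ext = Nat.card N * 2 := by
  simp [Nat.card_congr D.equivProd]

variable {G : Type*} [Group G]

lemma hom_ext {f₁ f₂ : D.Ext →* G} (h : f₁.comp D.incl = f₂.comp D.incl) (ht : f₁ D.t = f₂ D.t) :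
    f₁ = f₂ := by
  ext ⟨x, c⟩
  rw [mk_eq_incl_mul, map_mul, map_mul, ← MonoidHom.comp_apply, h]
  cases c <;> simp [ht]

def lift (ψ : Multiplicative N →* G) (g : G)
    (hψ : ∀ x, g⁻¹ * ψ (ofAdd x) * g = ψ (ofAdd (D.φ x))) (hg : g ^ 2 = ψ (ofAdd D.r)) :
    D.Ext →* G where
  toFun p := ψ (ofAdd p.x) * cond p.c g 1
  map_one' := by simp [one_def]
  map_mul' := by
    have hψ' (x : N) : g * ψ (ofAdd x) = ψ (ofAdd (D.φ x)) * g := by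
      conv_lhs => rw [← D.φ_φ x, ← hψ]
      group
    rintro ⟨x, c⟩ ⟨y, d⟩
    cases c <;> cases d <;> simp only [mk_mul_mk, ofAdd_add, map_mul, cond_true, cond_false,
      Bool.and_true, Bool.and_false, Bool.xor_true, Bool.xor_false, Bool.not_true, Bool.not_false,
      ofAdd_zero, mul_one, mul_assoc]
    · rw [hψ']
    · rw [← hg, pow_two, ← mul_assoc g, hψ', mul_assoc]

variable {ψ : Multiplicative N →* G} {g : G} {hψ : ∀ x, g⁻¹ * ψ (ofAdd x) * g = ψ (ofAdd (D.φ x))}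
  {hg : g ^ 2 = ψ (ofAdd D.r)}

@[simp]
lemma lift_incl (x : Multiplicative N) : D.lift ψ g hψ hg (D.incl x) = ψ x := mul_one _

@[simp]
lemma lift_t : D.lift ψ g hψ hg D.t = g := by simp [lift, t]

end IndexTwoData

namespace GammaPresentation

section Model

variable (n : ℕ)

lemma two_pow_succ_eq_zero : (2 : ZMod (2 ^ (n + 1))) ^ (n + 1) = 0 := by
  exact_mod_cast ZMod.natCast_self (2 ^ (n + 1))

/-- The subgroup `⟨σ, τ⟩ ≅ ℤ/2^(n+1) × ℤ/4` of `Γ_n`, written additively. -/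
abbrev N := ZMod (2 ^ (n + 1)) × ZMod 4

def κ : ZMod 4 →+ ZMod (2 ^ (n + 1)) := zmodScale (2 ^ n) ⟨2, by ring⟩

lemma κ_add_self (b : ZMod 4) : κ n b + κ n b = 0 := by
  obtain ⟨z, rfl⟩ := ZMod.intCast_surjective b
  rw [κ, zmodScale_intCast]
  push_cast
  linear_combination (z : ZMod (2 ^ (n + 1))) * two_pow_succ_eq_zero n

/-- Conjugation by `ρ`: `σ ↦ σ⁻¹`, `τ ↦ σ^(-2^n) τ⁻¹`. -/
def conjρ : N n →+ N n :=
  (-AddMonoidHom.fst _ _ - (κ n).comp (AddMonoidHom.snd _ _)).prod (-AddMonoidHom.snd _ _)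

lemma conjρ_apply (x : N n) : conjρ n x = (-x.1 - κ n x.2, -x.2) := rfl

def r : N n := 2 ^ n • (1, 0) + 2 • (0, 1)

lemma two_nsmul_r : 2 • r n = 0 := by
  ext
  · simp [r, ← pow_succ', two_pow_succ_eq_zero]
  · simp [r]
    decide

lemma sub_conjρ_one_zero : ((1, 0) : N n) - conjρ n (1, 0) = 2 • (1, 0) := by
  ext <;> simp [conjρ_apply, one_add_one_eq_two]

lemma sub_conjρ_zero_one : ((0, 1) : N n) - conjρ n (0, 1) = r n := by
  ext <;> simp [conjρ_apply, r, κ, one_add_one_eq_two]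

def gammaData : IndexTwoData (N n) where
  φ := conjρ n
  r := r n
  φ_φ x := by
    ext
    · simp [conjρ_apply, add_right_comm _ x.1, κ_add_self]
    · simp [conjρ_apply]
  φ_r := by
    have hκ : κ n 2 = 0 := by
      simpa [← map_add, one_add_one_eq_two] using κ_add_self n 1
    ext
    · simp [conjρ_apply, r, hκ]
      linear_combination -two_pow_succ_eq_zero n
    · simp [conjρ_apply, r]
      decide

@[simp] lemma gammaData_φ : (gammaData n).φ = conjρ n := rfl

@[simp] lemma gammaData_r : (gammaData n).r = r n := rfl

abbrev Model := (gammaData n).Ext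

def Model.ρ : Model n := (gammaData n).t
def Model.σ : Model n := (gammaData n).incl (ofAdd (1, 0))
def Model.τ : Model n := (gammaData n).incl (ofAdd (0, 1))

lemma Model.card : Nat.card (Model n) = 2 ^ (n + 4) := by
  rw [IndexTwoData.card_ext, Nat.card_prod, Nat.card_zmod, Nat.card_zmod]
  ring

variable {n} {G : Type*} [Group G]

lemma map_ofAdd_r (ψ : Multiplicative (N n) →* G) :
    ψ (ofAdd (r n)) = ψ (ofAdd (1, 0)) ^ 2 ^ n * ψ (ofAdd (0, 1)) ^ 2 := by
  rw [r, ofAdd_add, ofAdd_nsmul, ofAdd_nsmul, map_mul, map_pow, map_pow]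

lemma map_ofAdd_conjρ_one_zero (ψ : Multiplicative (N n) →* G) :
    ψ (ofAdd (conjρ n (1, 0))) = ψ (ofAdd (1, 0)) * (ψ (ofAdd (1, 0)) ^ 2)⁻¹ := by
  rw [← sub_sub_cancel (1, 0) (conjρ n (1, 0)), sub_conjρ_one_zero, ofAdd_sub, ofAdd_nsmul,
    map_div, map_pow, div_eq_mul_inv]

lemma map_ofAdd_conjρ_zero_one (ψ : Multiplicative (N n) →* G) :
    ψ (ofAdd (conjρ n (0, 1))) = ψ (ofAdd (0, 1)) * (ψ (ofAdd (r n)))⁻¹ := by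
  rw [← sub_sub_cancel (0, 1) (conjρ n (0, 1)), sub_conjρ_zero_one, ofAdd_sub, map_div,
    div_eq_mul_inv]

end Model

/-- The defining relations of `Γ_n`, for images `a`, `b`, `c` of `ρ`, `σ`, `τ`. -/
structure SatisfiesRels (n : ℕ) {G : Type*} [Group G] (a b c : G) : Prop where
  pow_a : a ^ 4 = 1
  pow_b : b ^ 2 ^ (n + 1) = 1
  pow_c : c ^ 4 = 1
  sq_a : a ^ 2 = b ^ 2 ^ n * c ^ 2
  comm_b_c : comm b c = 1
  comm_a_b : comm a b = b ^ 2
  comm_a_c : comm a c = b ^ 2 ^ n * c ^ 2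

lemma lift_rels_iff {n : ℕ} {G : Type*} [Group G] (f : Fin 3 → G) :
    (∀ w ∈ rels n, FreeGroup.lift f w = 1) ↔ SatisfiesRels n (f 0) (f 1) (f 2) := by
  simp only [rels, Set.forall_mem_insert, Set.mem_singleton_iff, forall_eq, map_pow, map_mul,
    map_inv, map_comm, ρ, σ, τ, FreeGroup.lift_apply_of, mul_inv_eq_one]
  exact ⟨fun ⟨h₁, h₂, h₃, h₄, h₅, h₆, h₇⟩ => ⟨h₁, h₂, h₃, h₄, h₅, h₆, h₇⟩,
    fun ⟨h₁, h₂, h₃, h₄, h₅, h₆, h₇⟩ => ⟨h₁, h₂, h₃, h₄, h₅, h₆, h₇⟩⟩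

section Relations

variable (n : ℕ)

def Gamma.ρ : Gamma n := PresentedGroup.of 0
def Gamma.σ : Gamma n := PresentedGroup.of 1
def Gamma.τ : Gamma n := PresentedGroup.of 2

lemma Gamma.satisfiesRels : SatisfiesRels n (Gamma.ρ n) (Gamma.σ n) (Gamma.τ n) := by
  refine (lift_rels_iff PresentedGroup.of).mp fun w hw => ?_
  have : FreeGroup.lift (PresentedGroup.of (rels := rels n)) = PresentedGroup.mk (rels n) :=
    FreeGroup.ext_hom _ _ fun _ => FreeGroup.lift_apply_of
  rw [this]
  exact PresentedGroup.one_of_mem hw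

lemma Model.incl_r : (gammaData n).incl (ofAdd (r n)) = Model.σ n ^ 2 ^ n * Model.τ n ^ 2 := by
  rw [map_ofAdd_r, Model.σ, Model.τ]

lemma Model.satisfiesRels : SatisfiesRels n (Model.ρ n) (Model.σ n) (Model.τ n) where
  pow_a := by
    rw [show Model.ρ n ^ 4 = (Model.ρ n ^ 2) ^ 2 by rw [← pow_mul], Model.ρ,
      IndexTwoData.t_sq, ← map_pow, ← ofAdd_nsmul, gammaData_r, two_nsmul_r, ofAdd_zero, map_one]
  pow_b := by
    rw [Model.σ, ← map_pow, ← ofAdd_nsmul]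
    simp [Prod.mk_zero_zero]
  pow_c := by
    rw [Model.τ, ← map_pow, ← ofAdd_nsmul]
    simp [Prod.mk_zero_zero, show (4 : ZMod 4) = 0 from rfl]
  sq_a := by rw [Model.ρ, IndexTwoData.t_sq, gammaData_r, Model.incl_r]
  comm_b_c := comm_eq_one_iff.mpr ((Commute.all _ _).map _)
  comm_a_b := by
    rw [Model.ρ, Model.σ, IndexTwoData.comm_t_incl, gammaData_φ, sub_conjρ_one_zero, ofAdd_nsmul,
      map_pow]
  comm_a_c := by
    rw [← Model.incl_r, Model.ρ, Model.τ, IndexTwoData.comm_t_incl, gammaData_φ,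
      sub_conjρ_zero_one]

def Gamma.toModel : Gamma n →* Model n :=
  PresentedGroup.toGroup ((lift_rels_iff ![Model.ρ n, Model.σ n, Model.τ n]).mpr
    (Model.satisfiesRels n))

@[simp] lemma Gamma.toModel_ρ : Gamma.toModel n (Gamma.ρ n) = Model.ρ n :=
  PresentedGroup.toGroup.of _

@[simp] lemma Gamma.toModel_σ : Gamma.toModel n (Gamma.σ n) = Model.σ n :=
  PresentedGroup.toGroup.of _

@[simp] lemma Gamma.toModel_τ : Gamma.toModel n (Gamma.τ n) = Model.τ n :=
  PresentedGroup.toGroup.of _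

end Relations

section Lift

variable {n : ℕ} {G : Type*} [Group G] {a b c : G}

def SatisfiesRels.homN (h : SatisfiesRels n a b c) : Multiplicative (N n) →* G :=
  zmodProdHom b c h.pow_b h.pow_c (comm_eq_one_iff.mp h.comm_b_c)

lemma SatisfiesRels.inv_mul_homN_mul (h : SatisfiesRels n a b c) (x : N n) :
    a⁻¹ * h.homN (ofAdd x) * a = h.homN (ofAdd (conjρ n x)) := by
  have : (MulAut.conj a⁻¹).toMonoidHom.comp h.homN = h.homN.comp (conjρ n).toMultiplicative :=
    MonoidHom.ext_zmodProd
      (by simp [homN, map_ofAdd_conjρ_one_zero, inv_mul_mul_eq_of_comm_eq h.comm_a_b])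
      (by simp [homN, map_ofAdd_conjρ_zero_one, map_ofAdd_r,
        inv_mul_mul_eq_of_comm_eq h.comm_a_c])
  simpa using DFunLike.congr_fun this (ofAdd x)

def Model.lift (h : SatisfiesRels n a b c) : Model n →* G :=
  (gammaData n).lift h.homN a h.inv_mul_homN_mul
    (by simp [SatisfiesRels.homN, map_ofAdd_r, h.sq_a])

@[simp] lemma Model.lift_ρ (h : SatisfiesRels n a b c) : Model.lift h (Model.ρ n) = a :=
  IndexTwoData.lift_t ..

@[simp] lemma Model.lift_σ (h : SatisfiesRels n a b c) : Model.lift h (Model.σ n) = b := by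
  simp [Model.lift, Model.σ, SatisfiesRels.homN]

@[simp] lemma Model.lift_τ (h : SatisfiesRels n a b c) : Model.lift h (Model.τ n) = c := by
  simp [Model.lift, Model.τ, SatisfiesRels.homN]

end Lift

def Gamma.equivModel (n : ℕ) : Gamma n ≃* Model n :=
  MonoidHom.toMulEquiv (Gamma.toModel n) (Model.lift (Gamma.satisfiesRels n))
    (PresentedGroup.ext fun i => by
      fin_cases i
      · exact (congrArg _ (Gamma.toModel_ρ n)).trans (Model.lift_ρ _)
      · exact (congrArg _ (Gamma.toModel_σ n)).trans (Model.lift_σ _)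
      · exact (congrArg _ (Gamma.toModel_τ n)).trans (Model.lift_τ _))
    (IndexTwoData.hom_ext _
      (MonoidHom.ext_zmodProd
        (show Gamma.toModel n (Model.lift (Gamma.satisfiesRels n) (Model.σ n)) = Model.σ n by simp)
        (show Gamma.toModel n (Model.lift (Gamma.satisfiesRels n) (Model.τ n)) = Model.τ n by simp))
      (show Gamma.toModel n (Model.lift (Gamma.satisfiesRels n) (Model.ρ n)) = Model.ρ n by simp))

section Abelianization

variable {n : ℕ}

lemma satisfiesRels_of_sq_eq_one {G : Type*} [CommGroup G] (hG : ∀ y : G, y ^ 2 = 1) (hn : n ≠ 0)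
    (a b c : G) : SatisfiesRels n a b c := by
  have h2 (y : G) (k : ℕ) (hk : k ≠ 0) : y ^ 2 ^ k = 1 := by
    rw [← Nat.succ_pred_eq_of_ne_zero hk, pow_succ', pow_mul, hG, one_pow]
  have hcomm (y z : G) : comm y z = 1 := comm_eq_one_iff.mpr (Commute.all y z)
  exact ⟨h2 a 2 two_ne_zero, h2 b _ n.succ_ne_zero, h2 c 2 two_ne_zero, by simp [hG, h2 b n hn],
    hcomm b c, by simp [hG, hcomm], by simp [hG, h2 b n hn, hcomm]⟩

abbrev C2Cube := Multiplicative (ZMod 2) × Multiplicative (ZMod 2) × Multiplicative (ZMod 2)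

lemma C2Cube.sq_eq_one (y : C2Cube) : y ^ 2 = 1 := by
  decide +revert

lemma C2Cube.card : Nat.card C2Cube = 8 := by
  simp [Nat.card_eq_fintype_card]

def Model.abelianMap (hn : n ≠ 0) : Model n →* C2Cube :=
  Model.lift
    (satisfiesRels_of_sq_eq_one C2Cube.sq_eq_one hn (1, 1, ofAdd 1) (ofAdd 1, 1, 1) (1, ofAdd 1, 1))

lemma Model.abelianMap_surjective (hn : n ≠ 0) : Function.Surjective (Model.abelianMap hn) := by
  rintro ⟨u, v, w⟩
  refine ⟨Model.σ n ^ (toAdd u).val * Model.τ n ^ (toAdd v).val * Model.ρ n ^ (toAdd w).val, ?_⟩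
  simp [Model.abelianMap, ofAdd_one_pow_val]

lemma Model.card_ker_abelianMap (hn : n ≠ 0) :
    Nat.card (Model.abelianMap hn).ker = 2 ^ (n + 1) := by
  have h := (Model.abelianMap hn).ker.card_mul_index
  rw [Subgroup.index_ker, MonoidHom.range_eq_top.mpr (Model.abelianMap_surjective hn),
    Subgroup.card_top, Model.card, C2Cube.card, show 2 ^ (n + 4) = 2 ^ (n + 1) * 8 by ring] at h
  exact Nat.eq_of_mul_eq_mul_right (by norm_num) h

end Abelianization

section Commutator

variable (n : ℕ)

/-- `(u, v) ↦ u • r + v • (2, 0)`, i.e. `(u, v) ↦ ρ^(2u) σ^(2v)`. -/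
def δ₀ : ZMod 2 × ZMod (2 ^ n) →+ N n :=
  ((zmodScale (2 ^ n) (pow_succ' 2 n).dvd).comp (AddMonoidHom.fst _ _) +
    (zmodScale 2 (pow_succ 2 n).dvd).comp (AddMonoidHom.snd _ _)).prod
    ((zmodScale 2 (dvd_refl 4)).comp (AddMonoidHom.fst _ _))

lemma δ₀_injective : Function.Injective (δ₀ n) := by
  refine (injective_iff_map_eq_zero _).mpr fun ⟨u, v⟩ h => ?_
  have hu : u = 0 := (injective_iff_map_eq_zero (zmodScale (k := 2) (m := 4) 2 (dvd_refl 4))).mp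
    (zmodScale_injective two_ne_zero (dvd_refl 4)) u (congrArg Prod.snd h)
  subst hu
  have hv : v = 0 := (injective_iff_map_eq_zero (zmodScale (k := 2 ^ n) 2 (pow_succ 2 n).dvd)).mp
    (zmodScale_injective two_ne_zero (pow_succ 2 n).dvd) v (by simpa [δ₀] using congrArg Prod.fst h)
  rw [hv]
  rfl

lemma δ₀_one_zero : δ₀ n (1, 0) = r n := by
  ext <;> simp [δ₀, r]

lemma δ₀_zero_one : δ₀ n (0, 1) = 2 • (1, 0) := by
  ext <;> simp [δ₀]

def Model.δ : Multiplicative (ZMod 2 × ZMod (2 ^ n)) →* Model n :=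
  (gammaData n).incl.comp (δ₀ n).toMultiplicative

lemma Model.δ_injective : Function.Injective (Model.δ n) :=
  (gammaData n).incl_injective.comp (δ₀_injective n)

lemma Model.range_δ_le_commutator : (Model.δ n).range ≤ commutator (Model n) := by
  rintro _ ⟨x, rfl⟩
  have hr : Model.δ n (ofAdd (1, 0)) = comm (Model.ρ n) (Model.τ n) := by
    rw [(Model.satisfiesRels n).comm_a_c, ← Model.incl_r]
    simp [Model.δ, δ₀_one_zero]
  have h2 : Model.δ n (ofAdd (0, 1)) = comm (Model.ρ n) (Model.σ n) := by
    rw [(Model.satisfiesRels n).comm_a_b, Model.σ, ← map_pow, ← ofAdd_nsmul, ← δ₀_zero_one]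
    rfl
  rw [← ofAdd_toAdd x, ofAdd_eq_pow_mul_pow, map_mul, map_pow, map_pow, hr, h2]
  exact mul_mem (pow_mem (comm_mem_commutator _ _) _) (pow_mem (comm_mem_commutator _ _) _)

lemma Model.card_range_δ : Nat.card (Model.δ n).range = 2 ^ (n + 1) := by
  rw [← Nat.card_congr (MonoidHom.ofInjective (Model.δ_injective n)).toEquiv]
  simp [Nat.card_eq_fintype_card, pow_succ']

variable {n}

lemma Model.range_δ_eq_ker (hn : n ≠ 0) : (Model.δ n).range = (Model.abelianMap hn).ker :=
  Subgroup.eq_of_le_of_card_ge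
    ((Model.range_δ_le_commutator n).trans (Abelianization.commutator_subset_ker _))
    (by rw [Model.card_ker_abelianMap, Model.card_range_δ])

lemma Model.commutator_eq_ker (hn : n ≠ 0) : commutator (Model n) = (Model.abelianMap hn).ker :=
  le_antisymm (Abelianization.commutator_subset_ker _)
    (Model.range_δ_eq_ker hn ▸ Model.range_δ_le_commutator n)

noncomputable def Model.abelianizationEquiv (hn : n ≠ 0) : Abelianization (Model n) ≃* C2Cube :=
  Abelianization.equivOfKerEq _ (Model.abelianMap_surjective hn) (Model.commutator_eq_ker hn).symm

noncomputable def Model.commutatorEquiv (hn : n ≠ 0) :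
    commutator (Model n) ≃* Multiplicative (ZMod 2) × Multiplicative (ZMod (2 ^ n)) :=
  (MulEquiv.subgroupCongr ((Model.commutator_eq_ker hn).trans (Model.range_δ_eq_ker hn).symm)).trans
    ((MonoidHom.ofInjective (Model.δ_injective n)).symm.trans (MulEquiv.prodMultiplicative _ _))

end Commutator

end GammaPresentation

open GammaPresentation in
/-- `Γ_n` has order `2^(n+4)`, abelianization `(ℤ/2)³`, and abelian commutator
subgroup isomorphic to `(ℤ/2) × (ℤ/2^n)`. -/
theorem Gamma_card_abelianization_commutator (n : ℕ) (hn : 1 ≤ n) :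
    Nat.card (Gamma n) = 2 ^ (n + 4) ∧
      Nonempty (Abelianization (Gamma n) ≃*
        (Multiplicative (ZMod 2) × Multiplicative (ZMod 2) × Multiplicative (ZMod 2))) ∧
      Nonempty ((commutator (Gamma n)) ≃*
        (Multiplicative (ZMod 2) × Multiplicative (ZMod (2 ^ n)))) := by
  have hn : n ≠ 0 := Nat.one_le_iff_ne_zero.mp hn
  let e := Gamma.equivModel n
  exact ⟨(Nat.card_congr e.toEquiv).trans (Model.card n),
    ⟨e.abelianizationCongr.trans (Model.abelianizationEquiv hn)⟩,
    ⟨e.commutatorCongr.trans (Model.commutatorEquiv hn)⟩⟩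
end
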